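/- Suppose M₁,…,M_K : ℂ₊ → ℂ₊ satisfy the quadratic vector equations -1/M_l(z) = z + Σ_{m=1}^K Q_{lm} α_m M_m(z) for all l, where Q_{lm} > 0 and α_m > 0 with Σ α_m = 1. If Im(z)² ≥ max_k α_k Σ_j Q_{kj}, then the matrix Q - Diag(1/(α₁M₁(z)²), …, 1/(α_K M_K(z)²)) is invertible. -/

import Mathlib

open Matrix

/-- For the QVE system, if Im(z)² ≥ max_k α_k Σ_j Q_{kj}, then
    Q - Diag(1/(α_k M_k(z)²)) is invertible. -/
theorem qve_coefficient_invertible {K : ℕ} (hK : 1 ≤ K)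
    (Q : Matrix (Fin K) (Fin K) ℝ) (hQsymm : Q.IsSymm) (hQpos : ∀ k l, 0 < Q k l)
    (α : Fin K → ℝ) (hα : ∀ k, 0 < α k ∧ α k < 1) (hsum : ∑ k, α k = 1)
    (M : ℂ → Fin K → ℂ)
    (hupper : ∀ z : ℂ, 0 < z.im → ∀ l, 0 < (M z l).im)
    (hqve : ∀ z : ℂ, 0 < z.im → ∀ l,
      -(1 / M z l) = z + ∑ m, (Q l m : ℂ) * (α m : ℂ) * M z m)
    (hbound : ∀ z : ℂ, 0 < z.im → ∀ j, ‖M z j‖ ≤ 1 / z.im)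
    (z : ℂ) (hz : 0 < z.im)
    (hIm : ∀ k, α k * ∑ j, Q k j ≤ z.im ^ 2) :
    IsUnit (Q.map Complex.ofReal -
      Matrix.diagonal (fun k => 1 / ((α k : ℂ) * (M z k) ^ 2))) := by
  haveI : Nonempty (Fin K) := ⟨⟨0, hK⟩⟩
  have hM0 : ∀ l, M z l ≠ 0 := by
    intro l h
    have := hupper z hz l
    rw [h] at this; simp at this
  -- strict bound |M z l|² * (Im z)² < 1
  have hsq : ∀ l, (‖M z l‖)^2 * z.im^2 < 1 := by
    intro l
    have him := congrArg Complex.im (hqve z hz l)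
    have hns : 0 < Complex.normSq (M z l) := Complex.normSq_pos.mpr (hM0 l)
    have hL : (-(1 / M z l)).im = (M z l).im / Complex.normSq (M z l) := by
      rw [Complex.neg_im, one_div, Complex.inv_im]; ring
    have hR : (z + ∑ m, (Q l m : ℂ) * (α m : ℂ) * M z m).im
        = z.im + ∑ m, Q l m * α m * (M z m).im := by
      rw [Complex.add_im, Complex.im_sum]
      congr 1
      refine Finset.sum_congr rfl fun m _ => ?_
      simp [Complex.mul_im, Complex.ofReal_re, Complex.ofReal_im]
    rw [hL, hR] at him
    have hpos : 0 < ∑ m, Q l m * α m * (M z m).im := by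
      apply Finset.sum_pos
      · intro m _
        exact mul_pos (mul_pos (hQpos l m) (hα m).1) (hupper z hz m)
      · exact Finset.univ_nonempty
    have hgt : z.im < (M z l).im / Complex.normSq (M z l) := by
      rw [him]; linarith
    have h1 : Complex.normSq (M z l) * z.im < (M z l).im := by
      have := (lt_div_iff₀ hns).mp hgt
      linarith
    have h2 : (M z l).im ≤ ‖M z l‖ := Complex.im_le_norm _
    have h3 : ‖M z l‖ ≤ 1 / z.im := hbound z hz l
    have h4 : (‖M z l‖)^2 = Complex.normSq (M z l) := Complex.sq_norm _
    have h5 : ‖M z l‖ * z.im ≤ 1 := (le_div_iff₀ hz).mp h3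
    nlinarith [mul_lt_mul_of_pos_right h1 hz, mul_le_mul_of_nonneg_right h2 hz.le,
      mul_le_mul_of_nonneg_right h5 hz.le]
  rw [Matrix.isUnit_iff_isUnit_det, isUnit_iff_ne_zero]
  intro hdet
  obtain ⟨v, hv0, hAv⟩ := (Matrix.exists_mulVec_eq_zero_iff).mpr hdet
  obtain ⟨k, hk⟩ := Finite.exists_max (fun j => ‖v j‖)
  have hvk : 0 < ‖v k‖ := by
    obtain ⟨j, hj⟩ := Function.ne_iff.mp hv0
    exact lt_of_lt_of_le (norm_pos_iff.mpr hj) (hk j)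
  have hrow : (1 / ((α k : ℂ) * (M z k) ^ 2)) * v k = ∑ j, (Q k j : ℂ) * v j := by
    have h := congrFun hAv k
    rw [Matrix.sub_mulVec] at h
    simp only [Pi.sub_apply, Pi.zero_apply, sub_eq_zero, Matrix.mulVec_diagonal] at h
    rw [← h]
    simp only [Matrix.mulVec, dotProduct, Matrix.map_apply]
  have hαk := (hα k).1
  have hMk : 0 < ‖M z k‖ := norm_pos_iff.mpr (hM0 k)
  have habsf : ‖1 / ((α k : ℂ) * (M z k) ^ 2)‖
      = 1 / (α k * (‖M z k‖)^2) := by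
    rw [norm_div, norm_one, norm_mul, norm_pow, Complex.norm_real, Real.norm_eq_abs, abs_of_pos hαk]
  have hle : (1 / (α k * (‖M z k‖)^2)) * ‖v k‖
      ≤ (∑ j, Q k j) * ‖v k‖ := by
    calc (1 / (α k * (‖M z k‖)^2)) * ‖v k‖
        = ‖(1 / ((α k : ℂ) * (M z k) ^ 2)) * v k‖ := by
          rw [norm_mul, habsf]
      _ = ‖∑ j, (Q k j : ℂ) * v j‖ := by rw [hrow]
      _ ≤ ∑ j, ‖(Q k j : ℂ) * v j‖ := norm_sum_le _ _
      _ = ∑ j, Q k j * ‖v j‖ := by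
          refine Finset.sum_congr rfl fun j _ => ?_
          rw [norm_mul, Complex.norm_real, Real.norm_eq_abs, abs_of_pos (hQpos k j)]
      _ ≤ ∑ j, Q k j * ‖v k‖ := by
          refine Finset.sum_le_sum fun j _ => ?_
          exact mul_le_mul_of_nonneg_left (hk j) (hQpos k j).le
      _ = (∑ j, Q k j) * ‖v k‖ := by rw [Finset.sum_mul]
  have hle2 : 1 / (α k * (‖M z k‖)^2) ≤ ∑ j, Q k j :=
    le_of_mul_le_mul_right hle hvk
  have hden : 0 < α k * (‖M z k‖)^2 :=
    mul_pos hαk (pow_pos hMk 2)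
  have h1 : (1:ℝ) ≤ (∑ j, Q k j) * (α k * (‖M z k‖)^2) :=
    (div_le_iff₀ hden).mp hle2
  have h2 := hIm k
  have h3 := hsq k
  nlinarith [sq_nonneg (‖M z k‖)]
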